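/- arXiv:1308.0840 — 2 statements merged into one kernel-verified Lean document; each statement's English description precedes it below -/
import Mathlib

section
/- Let π be any permutation of bitvectors of length n. Then there exists a permutation σ of bitvectors of length n+1 such that σ is parity-preserving and for every bitvector x of length n, σ applied to the extension of x by the bit 0 agrees with π(x) on the first n coordinates. That is, any n-variable reversible Boolean specification can be converted to a parity-preserving reversible specification using at most one extra variable set to constant 0 on the input side. -/
/-!
Split a length-`(n+1)` bitvector into its first `n` bits `x` and its last bit `b`, so that its
parity is `parity x xor b`. The map `(x, b) ↦ (π x, b xor parity x xor parity (π x))` is a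
bijection (a shear over `π`), and its last bit is chosen exactly so that the parity is unchanged.
-/

def parity {n : ℕ} (x : Fin n → Bool) : Bool :=
  (Finset.univ.filter fun i => x i = true).card % 2 == 1

lemma parity_snoc {n : ℕ} (x : Fin n → Bool) (b : Bool) :
    parity (Fin.snoc x b) = xor (parity x) b := by
  have hcard : (Finset.univ.filter fun i => (Fin.snoc x b : Fin (n + 1) → Bool) i = true).card
      = (Finset.univ.filter fun i => x i = true).card + if b then 1 else 0 := by
    rw [Finset.card_filter, Finset.card_filter, Fin.sum_univ_castSucc]
    simp
  unfold parity
  rw [hcard]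
  rcases Nat.mod_two_eq_zero_or_one (Finset.univ.filter fun i => x i = true).card with h | h <;>
    cases b <;> simp [Nat.add_mod, h]

namespace Equiv.Perm

variable {α : Type*}

def boolShear (p : α → Bool) (π : Perm α) : Perm (Bool × α) where
  toFun z := (xor z.1 (xor (p z.2) (p (π z.2))), π z.2)
  invFun z := (xor z.1 (xor (p (π.symm z.2)) (p z.2)), π.symm z.2)
  left_inv z := by simp
  right_inv z := by simp

@[simp]
lemma boolShear_apply_snd (p : α → Bool) (π : Perm α) (z : Bool × α) :
    (boolShear p π z).2 = π z.2 :=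
  rfl

lemma xor_boolShear (p : α → Bool) (π : Perm α) (z : Bool × α) :
    xor (p (boolShear p π z).2) (boolShear p π z).1 = xor (p z.2) z.1 := by
  simp only [boolShear, coe_fn_mk]
  cases z.1 <;> cases p z.2 <;> cases p (π z.2) <;> rfl

end Equiv.Perm

/-- Any permutation of length-n bitvectors extends, with one extra variable set to 0, to a
parity-preserving permutation of length-(n+1) bitvectors agreeing on the first n coordinates. -/
theorem exists_parity_preserving_extension (n : ℕ) (π : Equiv.Perm (Fin n → Bool)) :
    ∃ σ : Equiv.Perm (Fin (n + 1) → Bool),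
      (∀ y, parity (σ y) = parity y) ∧
      ∀ x : Fin n → Bool, ∀ i : Fin n, σ (Fin.snoc x false) i.castSucc = π x i := by
  let e := Fin.snocEquiv fun _ : Fin (n + 1) => Bool
  refine ⟨e.permCongr (π.boolShear parity), fun y => ?_, fun x i => ?_⟩
  · obtain ⟨z, rfl⟩ := e.surjective y
    rw [Equiv.permCongr_apply, e.symm_apply_apply]
    change parity (Fin.snoc _ _) = parity (Fin.snoc _ _)
    rw [parity_snoc, parity_snoc]
    exact π.xor_boolShear parity z
  · have : Fin.snoc x false = e (false, x) := rfl
    simp [this, e]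
end

section
/- Let f : (Fin n → Bool) → (Fin m → Bool). For y in the range of f, let n_y = |f⁻¹(y)| and n_{y,p} = |{x : f(x) = y and parity(x) = parity(y)}|. If g extra output bits suffice to extend f to an injective parity-preserving function F : (Fin n → Bool) → (Fin (m+g) → Bool) (first m coordinates of F agreeing with f, parity(F(x)) = parity(x) for all x), then for every y in the range, 2^(g-1) ≥ n_{y,p} and 2^(g-1) ≥ n_y − n_{y,p}. In particular g ≥ max over y of max(⌈log₂ n_{y,p}⌉ + 1, ⌈log₂ (n_y − n_{y,p})⌉ + 1) whenever the respective counts are positive. -/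
/-!
If `f x = y` then `F x` is `y` followed by a word `t x` of `g` extra bits, and parity preservation
forces `parity (t x) = parity x xor parity y`. Since `F` is injective, `x ↦ t x` is injective on each
class `{x | f x = y, parity x = b}`, which therefore embeds into the words of length `g` with a
fixed parity; there are exactly `2 ^ (g - 1)` of those.
-/

open Finset

theorem parity_eq_bodd {n : ℕ} (x : Fin n → Bool) : parity x = Nat.bodd #{i | x i = true} := by
  rw [parity, Nat.mod_two_of_bodd]
  cases Nat.bodd _ <;> rfl

theorem parity_append {m k : ℕ} (a : Fin m → Bool) (b : Fin k → Bool) :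
    parity (Fin.append a b) = xor (parity a) (parity b) := by
  simp only [parity_eq_bodd, card_filter, Fin.sum_univ_add, Fin.append_left, Fin.append_right,
    Nat.bodd_add]

theorem parity_cons {k : ℕ} (b : Bool) (t : Fin k → Bool) :
    parity (Fin.cons b t : Fin (k + 1) → Bool) = xor b (parity t) := by
  simp only [parity_eq_bodd, card_filter, Fin.sum_univ_succ, Fin.cons_zero, Fin.cons_succ,
    Nat.bodd_add]
  cases b <;> rfl

theorem card_filter_parity_eq (k : ℕ) (c : Bool) :
    #{z : Fin (k + 1) → Bool | parity z = c} = 2 ^ k := by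
  -- The first bit of a word of prescribed parity is determined by the remaining `k` bits.
  have hfiber : ({z : Fin (k + 1) → Bool | parity z = c} : Finset _) =
      univ.image fun t : Fin k → Bool => Fin.cons (xor c (parity t)) t := by
    ext z
    simp only [mem_filter, mem_univ, true_and, mem_image]
    constructor
    · rintro rfl
      have hz : parity z = xor (z 0) (parity (Fin.tail z)) := by
        rw [← parity_cons, Fin.cons_self_tail]
      refine ⟨Fin.tail z, ?_⟩
      rw [hz, Bool.xor_assoc, Bool.xor_self, Bool.xor_false, Fin.cons_self_tail]
    · rintro ⟨t, rfl⟩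
      rw [parity_cons, Bool.xor_assoc, Bool.xor_self, Bool.xor_false]
  rw [hfiber, card_image_of_injective _ fun t₁ t₂ h => (Fin.cons_inj.mp h).2]
  simp

theorem card_fiber_le_of_injective_extension {α : Type*} [Fintype α] {m k : ℕ}
    (f : α → Fin m → Bool) (F : α → Fin (m + (k + 1)) → Bool) (p : α → Bool)
    (hF : Function.Injective F) (hagree : ∀ x, ∀ i : Fin m, F x (Fin.castAdd (k + 1) i) = f x i)
    (hparity : ∀ x, parity (F x) = p x) (y : Fin m → Bool) (b : Bool) :
    #{x | f x = y ∧ p x = b} ≤ 2 ^ k := by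
  set extra : α → Fin (k + 1) → Bool := fun x j => F x (Fin.natAdd m j)
  have hsplit : ∀ x, F x = Fin.append (f x) (extra x) := fun x => by
    conv_lhs => rw [← Fin.append_castAdd_natAdd (f := F x)]
    simp only [hagree]
    rfl
  rw [← card_filter_parity_eq k (xor (parity y) b)]
  refine card_le_card_of_injOn extra ?_ ?_
  · intro x hx
    simp only [coe_filter, mem_univ, true_and, Set.mem_ofPred_eq] at hx ⊢
    have hpx := hparity x
    rw [hsplit, parity_append, hx.1, hx.2] at hpx
    rw [← hpx, ← Bool.xor_assoc, Bool.xor_self, Bool.false_xor]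
  · intro x₁ hx₁ x₂ hx₂ hextra
    simp only [coe_filter, mem_univ, true_and, Set.mem_ofPred_eq] at hx₁ hx₂
    exact hF (by rw [hsplit, hsplit, hx₁.1, hx₂.1, hextra])

/-- If g extra output bits suffice for an injective parity-preserving extension of f, then for
every output value y, 2^(g-1) bounds both the parity-matching preimage count and the
parity-mismatching preimage count; in particular g ≥ ⌈log₂ ·⌉ + 1 of each positive count. -/
theorem extra_bits_lower_bound (n m g : ℕ) (hg : 1 ≤ g)
    (f : (Fin n → Bool) → (Fin m → Bool))
    (F : (Fin n → Bool) → (Fin (m + g) → Bool))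
    (hF : Function.Injective F)
    (hagree : ∀ x, ∀ i : Fin m, F x (Fin.castAdd g i) = f x i)
    (hparity : ∀ x, parity (F x) = parity x) :
    ∀ y : Fin m → Bool,
      (Finset.univ.filter fun x => f x = y ∧ parity x = parity y).card ≤ 2 ^ (g - 1) ∧
      (Finset.univ.filter fun x => f x = y ∧ parity x ≠ parity y).card ≤ 2 ^ (g - 1) ∧
      (0 < (Finset.univ.filter fun x => f x = y ∧ parity x = parity y).card →
        Nat.clog 2 (Finset.univ.filter fun x => f x = y ∧ parity x = parity y).card + 1 ≤ g) ∧
      (0 < (Finset.univ.filter fun x => f x = y ∧ parity x ≠ parity y).card →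
        Nat.clog 2 (Finset.univ.filter fun x => f x = y ∧ parity x ≠ parity y).card + 1 ≤ g) := by
  intro y
  obtain ⟨k, rfl⟩ : ∃ k, g = k + 1 := ⟨g - 1, by omega⟩
  have hsame := card_fiber_le_of_injective_extension f F parity hF hagree hparity y (parity y)
  have hdiff := card_fiber_le_of_injective_extension f F parity hF hagree hparity y (!parity y)
  simp only [Bool.eq_not_iff] at hdiff
  have hclog {N : ℕ} (hN : N ≤ 2 ^ k) : Nat.clog 2 N + 1 ≤ k + 1 :=
    Nat.add_le_add_right ((Nat.clog_le_iff_le_pow one_lt_two).2 hN) 1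
  exact ⟨hsame, hdiff, fun _ => hclog hsame, fun _ => hclog hdiff⟩
end
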